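/- arXiv:math/0401139 — 3 statements merged into one kernel-verified Lean document; each statement's English description precedes it below -/
import Mathlib

section
/- The 2-cocycle μ_α on ℤ² given by μ_α((k,l),(k',l')) = exp(πiθ(kl'−k'l)) is a coboundary (i.e., of the form λ(x)λ(y)conj(λ(x+y)) for some λ : ℤ² → 𝕋) if and only if exp(2πiθ) = 1. -/
/-!
A coboundary on an abelian group is symmetric, whereas
`μ_α((1,0),(0,1)) = α · μ_α((0,1),(1,0))`; hence `α = 1`. Conversely, the coboundary of the
quadratic phase `(k, l) ↦ exp(πiθkl)` differs from `μ_α((k,l),(k',l'))` by the factor `α^(kl')`, which is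
trivial when `α = 1`.
-/

open Complex

/-- The 2-cocycle `μ_α` on `ℤ²` associated with `α = exp(2πiθ)`:
`μ_α((k,l),(k',l')) = exp(πiθ(kl' - k'l))`. -/
noncomputable def muAlpha (θ : ℝ) (x y : ℤ × ℤ) : ℂ :=
  Complex.exp (Real.pi * I * θ * ((x.1 * y.2 - x.2 * y.1 : ℤ) : ℂ))

open ComplexConjugate

def IsCircleCoboundary {G : Type*} [Add G] (μ : G → G → ℂ) : Prop :=
  ∃ lam : G → ℂ, (∀ x, ‖lam x‖ = 1) ∧ ∀ x y, μ x y = lam x * lam y * conj (lam (x + y))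

theorem IsCircleCoboundary.symm {G : Type*} [AddCommMagma G] {μ : G → G → ℂ}
    (hμ : IsCircleCoboundary μ) (x y : G) : μ x y = μ y x := by
  obtain ⟨lam, -, hlam⟩ := hμ
  rw [hlam, hlam, mul_comm (lam x), add_comm]

theorem muAlpha_swap_basis (θ : ℝ) :
    muAlpha θ (1, 0) (0, 1) = Complex.exp (2 * Real.pi * I * θ) * muAlpha θ (0, 1) (1, 0) := by
  simp only [muAlpha, ← Complex.exp_add]
  congr 1
  push_cast
  ring

theorem exp_two_pi_mul_I_eq_one_of_isCircleCoboundary {θ : ℝ}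
    (h : IsCircleCoboundary (muAlpha θ)) : Complex.exp (2 * Real.pi * I * θ) = 1 := by
  have hswap := muAlpha_swap_basis θ
  rw [h.symm] at hswap
  exact (mul_eq_right₀ (Complex.exp_ne_zero _)).mp hswap.symm

noncomputable def quadraticPhase (θ : ℝ) (x : ℤ × ℤ) : ℂ :=
  Complex.exp ((Real.pi * θ * (x.1 * x.2 : ℤ) : ℝ) * I)

theorem norm_quadraticPhase (θ : ℝ) (x : ℤ × ℤ) : ‖quadraticPhase θ x‖ = 1 :=
  Complex.norm_exp_ofReal_mul_I _

theorem muAlpha_eq_pow_mul_coboundary (θ : ℝ) (x y : ℤ × ℤ) :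
    muAlpha θ x y = Complex.exp (2 * Real.pi * I * θ) ^ (x.1 * y.2) *
      (quadraticPhase θ x * quadraticPhase θ y * conj (quadraticPhase θ (x + y))) := by
  simp only [muAlpha, quadraticPhase, ← Complex.exp_conj, ← Complex.exp_int_mul,
    ← Complex.exp_add, map_mul, conj_ofReal, conj_I, Prod.fst_add, Prod.snd_add]
  congr 1
  push_cast
  ring

theorem isCircleCoboundary_muAlpha {θ : ℝ} (h : Complex.exp (2 * Real.pi * I * θ) = 1) :
    IsCircleCoboundary (muAlpha θ) :=
  ⟨quadraticPhase θ, norm_quadraticPhase θ, fun x y => by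
    rw [muAlpha_eq_pow_mul_coboundary, h, one_zpow, one_mul]⟩

/-- `μ_α` is a coboundary, i.e. of the form `λ(x)λ(y) conj(λ(x+y))` for some
`𝕋`-valued `λ` on `ℤ²`, if and only if `exp(2πiθ) = 1`. -/
theorem muAlpha_coboundary_iff (θ : ℝ) :
    (∃ lam : ℤ × ℤ → ℂ, (∀ x, ‖lam x‖ = 1) ∧
      ∀ x y : ℤ × ℤ, muAlpha θ x y = lam x * lam y * (starRingEnd ℂ) (lam (x + y))) ↔
    Complex.exp (2 * Real.pi * I * θ) = 1 :=
  ⟨fun h => exp_two_pi_mul_I_eq_one_of_isCircleCoboundary h, fun h => isCircleCoboundary_muAlpha h⟩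
end

section
/- The map α ↦ [μ_α] from 𝕋 to H²(ℤ², 𝕋) is injective: if α, α' ∈ 𝕋 and μ_α · conj(μ_{α'}) is a coboundary, then α = α'. -/
/-!
A coboundary `λ(x) λ(y) conj λ(x + y)` on an abelian group is symmetric in `x, y`, whereas the
antisymmetrization `μ_α(x, y) / μ_α(y, x)` of the cocycle is `α ^ (x₁y₂ - x₂y₁)`, equal to `α`
on the standard basis. Since `μ_α · conj μ_{α'} = μ_{α conj α'}`, a coboundary of this form
forces `α conj α' = 1`.
-/

open Complex

theorem muAlpha_mul_conj (θ θ' : ℝ) (x y : ℤ × ℤ) :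
    muAlpha θ x y * (starRingEnd ℂ) (muAlpha θ' x y) = muAlpha (θ - θ') x y := by
  simp only [muAlpha, ← exp_conj, ← exp_add, map_mul, conj_ofReal, conj_I, map_intCast]
  push_cast
  ring_nf

theorem muAlpha_ne_zero (θ : ℝ) (x y : ℤ × ℤ) : muAlpha θ x y ≠ 0 :=
  exp_ne_zero _

theorem muAlpha_div_muAlpha_swap (θ : ℝ) (x y : ℤ × ℤ) :
    muAlpha θ x y / muAlpha θ y x =
      Complex.exp (2 * Real.pi * I * θ * ((x.1 * y.2 - x.2 * y.1 : ℤ) : ℂ)) := by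
  simp only [muAlpha, ← exp_sub]
  push_cast
  ring_nf

theorem coboundary_comm {G : Type*} [AddCommMagma G] (lam : G → ℂ) (x y : G) :
    lam x * lam y * (starRingEnd ℂ) (lam (x + y)) =
      lam y * lam x * (starRingEnd ℂ) (lam (y + x)) := by
  rw [mul_comm (lam x), add_comm]

/-- The map `α ↦ [μ_α]` from `𝕋` to `H²(ℤ², 𝕋)` is injective: if
`μ_α · conj(μ_{α'})` is a coboundary then `α = α'` (where `α = exp(2πiθ)`,
`α' = exp(2πiθ')`). -/
theorem muAlpha_injective (θ θ' : ℝ)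
    (h : ∃ lam : ℤ × ℤ → ℂ, (∀ x, ‖lam x‖ = 1) ∧
      ∀ x y : ℤ × ℤ, muAlpha θ x y * (starRingEnd ℂ) (muAlpha θ' x y) =
        lam x * lam y * (starRingEnd ℂ) (lam (x + y))) :
    Complex.exp (2 * Real.pi * I * θ) = Complex.exp (2 * Real.pi * I * θ') := by
  obtain ⟨lam, -, hcob⟩ := h
  have hsymm : muAlpha (θ - θ') (1, 0) (0, 1) = muAlpha (θ - θ') (0, 1) (1, 0) := by
    rw [← muAlpha_mul_conj, ← muAlpha_mul_conj, hcob, hcob, coboundary_comm]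
  have hone : Complex.exp (2 * Real.pi * I * (θ - θ' : ℝ)) = 1 := by
    have hratio := muAlpha_div_muAlpha_swap (θ - θ') (1, 0) (0, 1)
    rw [hsymm, div_self (muAlpha_ne_zero _ _ _)] at hratio
    simpa using hratio.symm
  calc Complex.exp (2 * Real.pi * I * θ)
      = Complex.exp (2 * Real.pi * I * (θ - θ' : ℝ)) * Complex.exp (2 * Real.pi * I * θ') := by
        rw [← exp_add]; push_cast; ring_nf
    _ = Complex.exp (2 * Real.pi * I * θ') := by rw [hone, one_mul]
end

section
/- Let Γ be a group acting on groups H and H' such that both pairs (H ⋊ Γ, H) and (H' ⋊ Γ, H') have the relative property (T). Then the pair ((H × H') ⋊ Γ, H × H') has the relative property (T), where Γ acts diagonally on H × H'. -/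
/-!
Let `K₁` and `K₂` be the spaces of vectors fixed by `H × 1` and by `1 × H'`. Both subgroups
are normal, so `K₁`, `K₂` and their orthogonal complements are invariant, and the orthogonal
projections `P₁`, `P₂` commute with the representation. Relative property (T) of `(H ⋊ Γ, H)`,
applied to the restriction of the representation to `K₁ᗮ`, shows that an almost invariant
unit vector `ξ` is close to `P₁ ξ`. The vector `P₁ ξ` is again almost invariant, so in the
same way `(H' ⋊ Γ, H')` makes it close to `P₂ P₁ ξ`. Hence `P₂ P₁ ξ` is nonzero, and it lies
in `K₁ ∩ K₂`.
-/

/-- A pair `(G, N)` with `N` a subgroup of `G` has the *relative property (T)*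
if there exist a finite set `F ⊆ G` and `δ > 0` such that every unitary
representation of `G` on a complex Hilbert space possessing an `(F,δ)`-almost
invariant unit vector has a nonzero `N`-invariant vector. -/
def RelPropertyT (G : Type*) [Group G] (N : Subgroup G) : Prop :=
  ∃ (F : Finset G) (δ : ℝ), 0 < δ ∧
    ∀ (H : Type) (_ : NormedAddCommGroup H) (_ : InnerProductSpace ℂ H)
      (_ : CompleteSpace H) (π : G →* (H ≃ₗᵢ[ℂ] H)),
      (∃ ξ : H, ‖ξ‖ = 1 ∧ ∀ g ∈ F, ‖π g ξ - ξ‖ < δ) →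
      ∃ ξ₀ : H, ξ₀ ≠ 0 ∧ ∀ h ∈ N, π h ξ₀ = ξ₀

section UnitaryRepresentation

variable {G : Type*} [Group G] {E : Type*} [NormedAddCommGroup E] [InnerProductSpace ℂ E]
  (π : G →* (E ≃ₗᵢ[ℂ] E))

def IsInvariantSubspace (K : Submodule ℂ E) : Prop :=
  ∀ g, ∀ v ∈ K, π g v ∈ K

def fixedSubmodule (N : Subgroup G) : Submodule ℂ E where
  carrier := {v | ∀ n ∈ N, π n v = v}
  add_mem' ha hb n hn := by simp [ha n hn, hb n hn]
  zero_mem' n _ := map_zero (π n)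
  smul_mem' c v hv n hn := by simp [hv n hn]

@[simp]
lemma mem_fixedSubmodule {N : Subgroup G} {v : E} :
    v ∈ fixedSubmodule π N ↔ ∀ n ∈ N, π n v = v :=
  Iff.rfl

lemma fixedSubmodule_comp {G' : Type*} [Group G'] (f : G' →* G) (N : Subgroup G') :
    fixedSubmodule (π.comp f) N = fixedSubmodule π (N.map f) := by
  ext v
  simp

lemma isClosed_fixedSubmodule (N : Subgroup G) : IsClosed (fixedSubmodule π N : Set E) := by
  have : (fixedSubmodule π N : Set E) = ⋂ n ∈ N, {v | π n v = v} := by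
    ext v
    simp
  rw [this]
  exact isClosed_biInter fun n _ => isClosed_eq (π n).continuous continuous_id

instance [CompleteSpace E] (N : Subgroup G) : (fixedSubmodule π N).HasOrthogonalProjection :=
  have := (isClosed_fixedSubmodule π N).completeSpace_coe
  inferInstance

lemma isInvariantSubspace_fixedSubmodule (N : Subgroup G) [N.Normal] :
    IsInvariantSubspace π (fixedSubmodule π N) := by
  intro g v hv n hn
  have hconj : π (g⁻¹ * n * g) v = v :=
    hv _ (by simpa using Subgroup.Normal.conj_mem ‹_› n hn g⁻¹)
  calc π n (π g v) = π g (π (g⁻¹ * n * g) v) := by simp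
    _ = π g v := by rw [hconj]

variable {π}

lemma IsInvariantSubspace.orthogonal {K : Submodule ℂ E} (hK : IsInvariantSubspace π K) :
    IsInvariantSubspace π Kᗮ := by
  intro g v hv w hw
  simpa [LinearIsometryEquiv.inner_map_eq_flip] using hv _ (hK g⁻¹ w hw)

lemma IsInvariantSubspace.comp {G' : Type*} [Group G'] {K : Submodule ℂ E}
    (hK : IsInvariantSubspace π K) (f : G' →* G) : IsInvariantSubspace (π.comp f) K :=
  fun g => hK (f g)

lemma IsInvariantSubspace.starProjection_map {K : Submodule ℂ E} [K.HasOrthogonalProjection]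
    (hK : IsInvariantSubspace π K) (g : G) (v : E) :
    K.starProjection (π g v) = π g (K.starProjection v) :=
  K.eq_starProjection_of_mem_orthogonal' (hK g _ (K.starProjection_apply_mem v))
    (hK.orthogonal g _ (K.sub_starProjection_mem_orthogonal v)) (by simp)

lemma IsInvariantSubspace.norm_map_starProjection_sub_le {K : Submodule ℂ E}
    [K.HasOrthogonalProjection] (hK : IsInvariantSubspace π K) (g : G) (v : E) :
    ‖π g (K.starProjection v) - K.starProjection v‖ ≤ ‖π g v - v‖ := by
  rw [← hK.starProjection_map, ← map_sub]
  exact K.norm_starProjection_apply_le _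

lemma IsInvariantSubspace.starProjection_mem_fixedSubmodule {K : Submodule ℂ E}
    [K.HasOrthogonalProjection] (hK : IsInvariantSubspace π K) {N : Subgroup G} {v : E}
    (hv : v ∈ fixedSubmodule π N) : K.starProjection v ∈ fixedSubmodule π N := fun n hn => by
  rw [← hK.starProjection_map, hv n hn]

variable (π) in
def subrepresentation (K : Submodule ℂ E) (hK : IsInvariantSubspace π K) :
    G →* (K ≃ₗᵢ[ℂ] K) where
  toFun g :=
    { toFun v := ⟨π g v, hK g v v.2⟩
      invFun v := ⟨π g⁻¹ v, hK g⁻¹ v v.2⟩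
      map_add' v w := by ext; simp
      map_smul' c v := by ext; simp
      left_inv v := by ext; simp
      right_inv v := by ext; simp
      norm_map' v := (π g).norm_map v }
  map_one' := by ext; simp
  map_mul' g h := by ext; simp

end UnitaryRepresentation

section KazhdanPair

variable {G : Type*} [Group G]

def IsKazhdanPair (N : Subgroup G) (F : Finset G) (δ : ℝ) : Prop :=
  0 < δ ∧ ∀ (X : Type) (_ : NormedAddCommGroup X) (_ : InnerProductSpace ℂ X)
      (_ : CompleteSpace X) (π : G →* (X ≃ₗᵢ[ℂ] X)),
      (∃ ξ : X, ‖ξ‖ = 1 ∧ ∀ g ∈ F, ‖π g ξ - ξ‖ < δ) →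
      ∃ ξ₀ : X, ξ₀ ≠ 0 ∧ ∀ h ∈ N, π h ξ₀ = ξ₀

lemma relPropertyT_iff_exists_isKazhdanPair {N : Subgroup G} :
    RelPropertyT G N ↔ ∃ F δ, IsKazhdanPair N F δ :=
  Iff.rfl

namespace IsKazhdanPair

variable {N : Subgroup G} [N.Normal] {F : Finset G} {δ : ℝ}
  {E : Type} [NormedAddCommGroup E] [InnerProductSpace ℂ E] [CompleteSpace E]
  (π : G →* (E ≃ₗᵢ[ℂ] E))

lemma exists_mul_norm_le_norm_sub (hT : IsKazhdanPair N F δ) {η : E}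
    (hη : η ∈ (fixedSubmodule π N)ᗮ) (hη0 : η ≠ 0) :
    ∃ g ∈ F, δ * ‖η‖ ≤ ‖π g η - η‖ := by
  by_contra! hsmall
  set K := fixedSubmodule π N
  let ρ := subrepresentation π Kᗮ (isInvariantSubspace_fixedSubmodule π N).orthogonal
  have hη_pos : 0 < ‖η‖ := norm_pos_iff.2 hη0
  let u : Kᗮ := ((‖η‖ : ℂ)⁻¹) • ⟨η, hη⟩
  have hu : ‖u‖ = 1 := by
    simp [u, norm_smul, hη_pos.ne']
  have hu_almost : ∀ g ∈ F, ‖ρ g u - u‖ < δ := by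
    intro g hg
    have : ‖ρ g u - u‖ = ‖η‖⁻¹ * ‖π g η - η‖ := by
      simp only [u, map_smul, ← smul_sub, norm_smul, norm_inv, Complex.norm_real, norm_norm]
      rfl
    rw [this, inv_mul_lt_iff₀ hη_pos, mul_comm]
    exact hsmall g hg
  obtain ⟨ζ, hζ0, hζ⟩ :=
    hT.2 Kᗮ inferInstance inferInstance inferInstance ρ ⟨u, hu, hu_almost⟩
  refine hζ0 (Subtype.ext ?_)
  exact K.orthogonal_disjoint.le_bot ⟨fun n hn => congrArg Subtype.val (hζ n hn), ζ.2⟩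

lemma norm_sub_starProjection_lt (hT : IsKazhdanPair N F δ) {ε : ℝ} (hε : 0 < ε) {ξ : E}
    (hξ : ∀ g ∈ F, ‖π g ξ - ξ‖ < δ * ε) :
    ‖ξ - (fixedSubmodule π N).starProjection ξ‖ < ε := by
  set K := fixedSubmodule π N
  by_contra! hle
  have h0 : ξ - K.starProjection ξ ≠ 0 := fun h => by
    rw [h, norm_zero] at hle
    exact hε.not_ge hle
  obtain ⟨g, hg, hge⟩ :=
    hT.exists_mul_norm_le_norm_sub π (K.sub_starProjection_mem_orthogonal ξ) h0
  have hKo := (isInvariantSubspace_fixedSubmodule π N).orthogonal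
  have := calc δ * ε ≤ δ * ‖ξ - K.starProjection ξ‖ := by gcongr; exact hT.1.le
    _ ≤ _ := hge
    _ ≤ ‖π g ξ - ξ‖ := by simpa using hKo.norm_map_starProjection_sub_le g ξ
    _ < δ * ε := hξ g hg
  exact this.false

end IsKazhdanPair

end KazhdanPair

instance SemidirectProduct.normal_range_inl {N G : Type*} [Group N] [Group G]
    {φ : G →* MulAut N} : (SemidirectProduct.inl : N →* N ⋊[φ] G).range.Normal :=
  SemidirectProduct.range_inl_eq_ker_rightHom (φ := φ) ▸ MonoidHom.normal_ker _

section DiagonalAction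

open SemidirectProduct

variable {Γ H H' : Type*} [Group Γ] [Group H] [Group H'] {φ : Γ →* MulAut H}
  {φ' : Γ →* MulAut H'} {φd : Γ →* MulAut (H × H')}
  (hφd : ∀ (g : Γ) (x : H) (y : H'), φd g (x, y) = (φ g x, φ' g y))

def embFst : H ⋊[φ] Γ →* (H × H') ⋊[φd] Γ :=
  map (MonoidHom.inl H H') (MonoidHom.id Γ) fun γ => MonoidHom.ext fun x => by
    simp [hφd]

def embSnd : H' ⋊[φ'] Γ →* (H × H') ⋊[φd] Γ :=
  map (MonoidHom.inr H H') (MonoidHom.id Γ) fun γ => MonoidHom.ext fun y => by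
    simp [hφd]

def projFst : (H × H') ⋊[φd] Γ →* H ⋊[φ] Γ :=
  map (MonoidHom.fst H H') (MonoidHom.id Γ) fun γ => MonoidHom.ext fun p => by
    simp [hφd]

def projSnd : (H × H') ⋊[φd] Γ →* H' ⋊[φ'] Γ :=
  map (MonoidHom.snd H H') (MonoidHom.id Γ) fun γ => MonoidHom.ext fun p => by
    simp [hφd]

lemma ker_projSnd : (projSnd hφd).ker = (inl.range).map (embFst hφd) := by
  rw [← MonoidHom.range_comp]
  ext ⟨⟨x, y⟩, γ⟩
  simp [projSnd, embFst, SemidirectProduct.ext_iff, eq_comm]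

lemma ker_projFst : (projFst hφd).ker = (inl.range).map (embSnd hφd) := by
  rw [← MonoidHom.range_comp]
  ext ⟨⟨x, y⟩, γ⟩
  simp [projFst, embSnd, SemidirectProduct.ext_iff, eq_comm]

lemma inl_eq_embFst_mul_embSnd (x : H) (y : H') :
    (inl (x, y) : (H × H') ⋊[φd] Γ) = embFst hφd (inl x) * embSnd hφd (inl y) := by
  simp [embFst, embSnd, ← map_mul]

variable {E : Type*} [NormedAddCommGroup E] [InnerProductSpace ℂ E]
  (π : (H × H') ⋊[φd] Γ →* (E ≃ₗᵢ[ℂ] E))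

lemma isInvariantSubspace_fixedSubmodule_embFst :
    IsInvariantSubspace π (fixedSubmodule (π.comp (embFst hφd)) inl.range) := by
  rw [fixedSubmodule_comp, ← ker_projSnd]
  exact isInvariantSubspace_fixedSubmodule π _

lemma isInvariantSubspace_fixedSubmodule_embSnd :
    IsInvariantSubspace π (fixedSubmodule (π.comp (embSnd hφd)) inl.range) := by
  rw [fixedSubmodule_comp, ← ker_projFst]
  exact isInvariantSubspace_fixedSubmodule π _

lemma inf_fixedSubmodule_embFst_embSnd_le :
    fixedSubmodule (π.comp (embFst hφd)) inl.range ⊓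
        fixedSubmodule (π.comp (embSnd hφd)) inl.range ≤ fixedSubmodule π inl.range := by
  rintro v ⟨hv₁, hv₂⟩ _ ⟨⟨x, y⟩, rfl⟩
  rw [inl_eq_embFst_mul_embSnd hφd, map_mul, LinearIsometryEquiv.coe_mul, Function.comp_apply]
  calc π (embFst hφd (inl x)) (π (embSnd hφd (inl y)) v) = π (embFst hφd (inl x)) v :=
        congrArg _ (hv₂ (inl y) ⟨y, rfl⟩)
    _ = v := hv₁ (inl x) ⟨x, rfl⟩

end DiagonalAction

open SemidirectProduct Finset in
/-- If `(H ⋊ Γ, H)` and `(H' ⋊ Γ, H')` have relative property (T), then so does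
`((H × H') ⋊ Γ, H × H')` for the diagonal action of `Γ` on `H × H'`. -/
theorem relT_prod (Γ H H' : Type*) [Group Γ] [Group H] [Group H']
    (φ : Γ →* MulAut H) (φ' : Γ →* MulAut H')
    (φd : Γ →* MulAut (H × H'))
    (hφd : ∀ (g : Γ) (x : H) (y : H'), φd g (x, y) = (φ g x, φ' g y))
    (h1 : RelPropertyT (H ⋊[φ] Γ) (SemidirectProduct.inl (φ := φ)).range)
    (h2 : RelPropertyT (H' ⋊[φ'] Γ) (SemidirectProduct.inl (φ := φ')).range) :
    RelPropertyT ((H × H') ⋊[φd] Γ) (SemidirectProduct.inl (φ := φd)).range := by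
  classical
  obtain ⟨F₁, δ₁, hT₁⟩ := relPropertyT_iff_exists_isKazhdanPair.1 h1
  obtain ⟨F₂, δ₂, hT₂⟩ := relPropertyT_iff_exists_isKazhdanPair.1 h2
  have hδ₁ : min δ₁ δ₂ / 2 ≤ δ₁ * (1 / 2) := by linarith [min_le_left δ₁ δ₂]
  have hδ₂ : min δ₁ δ₂ / 2 ≤ δ₂ * (1 / 2) := by linarith [min_le_right δ₁ δ₂]
  have hδ : 0 < min δ₁ δ₂ / 2 := by have := hT₁.1; have := hT₂.1; positivity
  refine ⟨F₁.image (embFst hφd) ∪ F₂.image (embSnd hφd), min δ₁ δ₂ / 2, hδ, ?_⟩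
  rintro E _ _ _ π ⟨ξ, hξ, hF⟩
  set K₁ := fixedSubmodule (π.comp (embFst hφd)) inl.range
  set K₂ := fixedSubmodule (π.comp (embSnd hφd)) inl.range
  have hK₁ := isInvariantSubspace_fixedSubmodule_embFst hφd π
  have hK₂ := isInvariantSubspace_fixedSubmodule_embSnd hφd π
  set ξ₁ := K₁.starProjection ξ
  set ξ₂ := K₂.starProjection ξ₁
  have hξ₁ : ‖ξ - ξ₁‖ < 1 / 2 :=
    hT₁.norm_sub_starProjection_lt _ one_half_pos fun g hg =>
      (hF _ (mem_union_left _ (mem_image_of_mem _ hg))).trans_le hδ₁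
  have hξ₂ : ‖ξ₁ - ξ₂‖ < 1 / 2 :=
    hT₂.norm_sub_starProjection_lt _ one_half_pos fun g hg =>
      ((hK₁.norm_map_starProjection_sub_le _ ξ).trans_lt
        (hF _ (mem_union_right _ (mem_image_of_mem _ hg)))).trans_le hδ₂
  refine ⟨ξ₂, fun h0 => ?_, inf_fixedSubmodule_embFst_embSnd_le hφd π ⟨?_, ?_⟩⟩
  · have := norm_sub_le_norm_sub_add_norm_sub ξ ξ₁ ξ₂
    simp only [h0, sub_zero, hξ] at this hξ₂
    linarith
  · exact (hK₂.comp _).starProjection_mem_fixedSubmodule (K₁.starProjection_apply_mem ξ)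
  · exact K₂.starProjection_apply_mem ξ₁
end
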